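/- arXiv:1808.03043 — 2 statements merged into one kernel-verified Lean document; each statement's English description precedes it below -/
import Mathlib

section
/- If Γ is a conjunction of clauses each containing at most 2 literals (a Krom/2CNF formula), and r₁,...,r_p are truth assignments each satisfying Γ with p odd, then the majority assignment m (defined by m(x) = 1 iff a strict majority of the rᵢ set x to 1) also satisfies Γ. -/
/-- A literal over variables `V`: a variable together with a polarity. -/
abbrev Lit (V : Type) := V × Bool

/-- A literal `(v, b)` is satisfied by assignment `a` iff `a v = b`. -/
def evalLit {V : Type} (a : V → Bool) (l : Lit V) : Bool := a l.1 == l.2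

/-- An assignment satisfies a CNF formula (list of clauses, each a list of literals)
iff in every clause some literal is satisfied. -/
def satCNF {V : Type} (a : V → Bool) (φ : List (List (Lit V))) : Prop :=
  ∀ c ∈ φ, ∃ l ∈ c, evalLit a l = true

/-!
Every voter satisfies some literal of a clause, so by pigeonhole some literal of a clause with
at most two literals is satisfied by at least half of the voters, hence, the number of voters
being odd, by a strict majority of them; such a literal is then satisfied by the majority
assignment.
-/

open Finset

variable {ι V : Type} [Fintype ι]

def majority (r : ι → V → Bool) : V → Bool :=
  fun x => decide (Fintype.card ι < 2 * #{i | r i x = true})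

lemma evalLit_majority_of_lt_two_mul_card {r : ι → V → Bool} {l : Lit V}
    (h : Fintype.card ι < 2 * #{i | evalLit (r i) l = true}) :
    evalLit (majority r) l = true := by
  obtain ⟨v, b⟩ := l
  have hsplit := card_filter_add_card_filter_not (s := univ) (fun i => r i v = true)
  rw [card_univ] at hsplit
  cases b <;> simp_all [evalLit, majority]
  omega

lemma exists_lit_card_le_length_mul_card (r : ι → V → Bool) {c : List (Lit V)}
    (hc : c ≠ []) (hsat : ∀ i, ∃ l ∈ c, evalLit (r i) l = true) :
    ∃ l ∈ c, Fintype.card ι ≤ c.length * #{i | evalLit (r i) l = true} := by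
  classical
  set S : Lit V → Finset ι := fun l => {i | evalLit (r i) l = true}
  have hcover : Fintype.card ι ≤ ∑ l ∈ c.toFinset, #(S l) := by
    calc Fintype.card ι = #(univ : Finset ι) := card_univ.symm
      _ ≤ #(c.toFinset.biUnion S) := card_le_card fun i _ => by
          obtain ⟨l, hl, hsat⟩ := hsat i
          exact mem_biUnion.2 ⟨l, List.mem_toFinset.2 hl, mem_filter.2 ⟨mem_univ i, hsat⟩⟩
      _ ≤ ∑ l ∈ c.toFinset, #(S l) := card_biUnion_le
  obtain ⟨l, hl, hle⟩ := exists_le_of_sum_le (List.toFinset_nonempty_iff c |>.2 hc)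
    (f := fun _ => Fintype.card ι) (g := fun l => #c.toFinset * #(S l))
    (by simpa only [sum_const, smul_eq_mul, ← mul_sum] using Nat.mul_le_mul_left _ hcover)
  exact ⟨l, List.mem_toFinset.1 hl,
    hle.trans (Nat.mul_le_mul_right _ (List.toFinset_card_le c))⟩

lemma exists_lit_lt_two_mul_card_of_length_le_two (r : ι → V → Bool) {c : List (Lit V)}
    (hodd : Odd (Fintype.card ι)) (hc : c.length ≤ 2)
    (hsat : ∀ i, ∃ l ∈ c, evalLit (r i) l = true) :
    ∃ l ∈ c, Fintype.card ι < 2 * #{i | evalLit (r i) l = true} := by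
  obtain ⟨i⟩ : Nonempty ι := Fintype.card_pos_iff.1 hodd.pos
  have hne : c ≠ [] := by
    rintro rfl
    simpa using hsat i
  obtain ⟨l, hl, hle⟩ := exists_lit_card_le_length_mul_card r hne hsat
  obtain ⟨k, hk⟩ := hodd
  refine ⟨l, hl, ?_⟩
  have := hle.trans (Nat.mul_le_mul_right _ hc)
  omega

theorem krom_majority_consistent
    (V : Type) (Γ : List (List (Lit V)))
    (hKrom : ∀ c ∈ Γ, c.length ≤ 2)
    (p : ℕ) (hp : Odd p)
    (r : Fin p → V → Bool)
    (hr : ∀ i, satCNF (r i) Γ) :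
    satCNF (fun x => decide (p < 2 * (Finset.univ.filter (fun i => r i x = true)).card)) Γ := by
  intro c hc
  obtain ⟨l, hl, hmaj⟩ := exists_lit_lt_two_mul_card_of_length_le_two r
    (by rwa [Fintype.card_fin]) (hKrom c hc) (fun i => hr i c hc)
  refine ⟨l, hl, ?_⟩
  simpa only [evalLit, majority, Fintype.card_fin] using evalLit_majority_of_lt_two_mul_card hmaj
end

section
/- Let Γ be a satisfiable Boolean function over a finite linearly ordered set of 2n literals l₁ < l₂ < ... < l_{2n} (each variable appearing once positively and once negatively in the list). Define partial assignments s₀ ⊆ s₁ ⊆ ... inductively: s₀ is empty, and s_{i+1} extends sᵢ by setting lᵢ to true if sᵢ does not already set lᵢ false and the resulting partial assignment is consistent with Γ; otherwise s_{i+1} = sᵢ. Then the final partial assignment s_{2n} is a complete assignment satisfying Γ. -/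
/-!
The agenda only ever extends the partial assignment and keeps it consistent, so the final
assignment `s (2 * n)` has a satisfying completion `a`. Every variable `v` has its literal
`(v, a v)` processed at some step `k`; since `a` also completes `s k`, setting `v` to `a v`
there is both allowed and consistent, so that step does it. Hence `s (2 * n)` is `a`.
-/

/-- A partial assignment `α` is consistent with `Γ` if some complete assignment
extending it satisfies `Γ`. -/
def ConsistentWith {V : Type} (Γ : (V → Bool) → Bool) (α : V → Option Bool) : Prop :=
  ∃ a : V → Bool, Γ a = true ∧ ∀ v b, α v = some b → a v = b

section RankedAgenda

variable {V : Type} [DecidableEq V] (Γ : (V → Bool) → Bool)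

open Classical in
noncomputable def agendaStep (α : V → Option Bool) (l : V × Bool) : V → Option Bool :=
  if α l.1 ≠ some (!l.2) ∧ ConsistentWith Γ (Function.update α l.1 (some l.2)) then
    Function.update α l.1 (some l.2)
  else α

variable {Γ}

theorem agendaStep_apply_of_eq_some {α : V → Option Bool} {v : V} {b : Bool}
    (h : α v = some b) (l : V × Bool) : agendaStep Γ α l v = some b := by
  unfold agendaStep
  split_ifs with hc
  · rcases eq_or_ne v l.1 with rfl | hne
    · have hb : b ≠ !l.2 := fun hb => hc.1 (by rw [h, hb])
      rw [Function.update_self, Bool.eq_not_of_ne hb, Bool.not_not]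
    · rwa [Function.update_of_ne hne]
  · exact h

theorem ConsistentWith.agendaStep {α : V → Option Bool} (h : ConsistentWith Γ α)
    (l : V × Bool) : ConsistentWith Γ (agendaStep Γ α l) := by
  unfold _root_.agendaStep
  split_ifs with hc
  exacts [hc.2, h]

theorem consistentWith_update_of_extends {α : V → Option Bool} {a : V → Bool}
    (ha : Γ a = true) (hα : ∀ v b, α v = some b → a v = b) (v : V) :
    ConsistentWith Γ (Function.update α v (some (a v))) := by
  refine ⟨a, ha, fun w b hw => ?_⟩
  rcases eq_or_ne w v with rfl | hne
  · simpa using hw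
  · exact hα w b (by rwa [Function.update_of_ne hne] at hw)

theorem agendaStep_apply_of_extends {α : V → Option Bool} {a : V → Bool}
    (ha : Γ a = true) (hα : ∀ v b, α v = some b → a v = b) (v : V) :
    agendaStep Γ α (v, a v) v = some (a v) := by
  have hallowed : α v ≠ some (!a v) := fun hv => by simpa using hα v _ hv
  rw [agendaStep, if_pos ⟨hallowed, consistentWith_update_of_extends ha hα v⟩,
    Function.update_self]

variable {N : ℕ} {L : Fin N → V × Bool} {s : ℕ → V → Option Bool}

theorem agenda_apply_of_eq_some
    (hs : ∀ i (hi : i < N), s (i + 1) = agendaStep Γ (s i) (L ⟨i, hi⟩))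
    {i j : ℕ} (hij : i ≤ j) (hj : j ≤ N) {v : V} {b : Bool} (h : s i v = some b) :
    s j v = some b := by
  induction j, hij using Nat.le_induction with
  | base => exact h
  | succ k _ ih =>
    rw [hs k (by omega)]
    exact agendaStep_apply_of_eq_some (ih (by omega)) _

theorem agenda_consistentWith
    (hs : ∀ i (hi : i < N), s (i + 1) = agendaStep Γ (s i) (L ⟨i, hi⟩))
    (h0 : ConsistentWith Γ (s 0)) {i : ℕ} (hi : i ≤ N) : ConsistentWith Γ (s i) := by
  induction i with
  | zero => exact h0
  | succ k ih =>
    rw [hs k (by omega)]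
    exact (ih (by omega)).agendaStep _

theorem agenda_complete
    (hs : ∀ i (hi : i < N), s (i + 1) = agendaStep Γ (s i) (L ⟨i, hi⟩))
    (h0 : ConsistentWith Γ (s 0)) (hL : Function.Surjective L) :
    ∃ a : V → Bool, (∀ v, s N v = some (a v)) ∧ Γ a = true := by
  obtain ⟨a, ha, hsN⟩ := agenda_consistentWith hs h0 le_rfl
  refine ⟨a, fun v => ?_, ha⟩
  obtain ⟨⟨k, hk⟩, hLk⟩ := hL (v, a v)
  have hsk : ∀ w b, s k w = some b → a w = b := fun w b hw =>
    hsN w b (agenda_apply_of_eq_some hs hk.le le_rfl hw)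
  have hset : s (k + 1) v = some (a v) := by
    rw [hs k hk, hLk]
    exact agendaStep_apply_of_extends ha hsk v
  exact agenda_apply_of_eq_some hs hk le_rfl hset

end RankedAgenda

theorem ranked_agenda_complete_and_rational_general
    (V : Type) [DecidableEq V]
    (n : ℕ)
    (Γ : (V → Bool) → Bool) (hΓ : ∃ a : V → Bool, Γ a = true)
    -- the tie-broken ordering of all 2n literals: a bijective enumeration
    (L : Fin (2 * n) → V × Bool) (hL : Function.Bijective L)
    -- the inductively defined sequence of partial assignments
    (s : ℕ → V → Option Bool)
    (hs0 : s 0 = fun _ => none)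
    (hstep : ∀ i (hi : i < 2 * n),
      ((s i (L ⟨i, hi⟩).1 ≠ some (!(L ⟨i, hi⟩).2) ∧
          ConsistentWith Γ (Function.update (s i) (L ⟨i, hi⟩).1 (some (L ⟨i, hi⟩).2)) →
            s (i + 1) = Function.update (s i) (L ⟨i, hi⟩).1 (some (L ⟨i, hi⟩).2)) ∧
       (¬ (s i (L ⟨i, hi⟩).1 ≠ some (!(L ⟨i, hi⟩).2) ∧
          ConsistentWith Γ (Function.update (s i) (L ⟨i, hi⟩).1 (some (L ⟨i, hi⟩).2))) →
            s (i + 1) = s i))) :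
    ∃ a : V → Bool, (∀ v, s (2 * n) v = some (a v)) ∧ Γ a = true := by
  have hs : ∀ i (hi : i < 2 * n), s (i + 1) = agendaStep Γ (s i) (L ⟨i, hi⟩) := by
    intro i hi
    unfold agendaStep
    split_ifs with hc
    exacts [(hstep i hi).1 hc, (hstep i hi).2 hc]
  have h0 : ConsistentWith Γ (s 0) := by
    obtain ⟨a, ha⟩ := hΓ
    exact ⟨a, ha, by simp [hs0]⟩
  exact agenda_complete hs h0 hL.surjective

theorem ranked_agenda_complete_and_rational
    (V : Type) [Fintype V] [DecidableEq V]
    (n : ℕ) (hn : n = Fintype.card V)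
    (Γ : (V → Bool) → Bool) (hΓ : ∃ a : V → Bool, Γ a = true)
    -- the tie-broken ordering of all 2n literals: a bijective enumeration
    (L : Fin (2 * n) → V × Bool) (hL : Function.Bijective L)
    -- the inductively defined sequence of partial assignments
    (s : ℕ → V → Option Bool)
    (hs0 : s 0 = fun _ => none)
    (hstep : ∀ i (hi : i < 2 * n),
      ((s i (L ⟨i, hi⟩).1 ≠ some (!(L ⟨i, hi⟩).2) ∧
          ConsistentWith Γ (Function.update (s i) (L ⟨i, hi⟩).1 (some (L ⟨i, hi⟩).2)) →
            s (i + 1) = Function.update (s i) (L ⟨i, hi⟩).1 (some (L ⟨i, hi⟩).2)) ∧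
       (¬ (s i (L ⟨i, hi⟩).1 ≠ some (!(L ⟨i, hi⟩).2) ∧
          ConsistentWith Γ (Function.update (s i) (L ⟨i, hi⟩).1 (some (L ⟨i, hi⟩).2))) →
            s (i + 1) = s i))) :
    ∃ a : V → Bool, (∀ v, s (2 * n) v = some (a v)) ∧ Γ a = true :=
  ranked_agenda_complete_and_rational_general V n Γ hΓ L hL s hs0 hstep
end
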